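/- Let (ξ_j^{(N)*})_{j=1}^N be the unique maximizer of T_N. Then for all j < N, ξ_j^{(N)*} < (B - ∑_{i=1}^j ξ_i^{(N)*})/w, and for j = N equality holds: ξ_N^{(N)*} = (B - ∑_{i=1}^N ξ_i^{(N)*})/w. -/

import Mathlib

/-!
Both claims are first-order optimality conditions for two local perturbations of the maximizer.
Changing only `ξ_N` to `x` changes `T_N` by a positive multiple of
`log (1 + γ x) + w log (1 + (γ/w) (R - x))`, `R = B - ∑_{i<N} ξ_i`, which by strict concavity of
`log` is maximal exactly when `γ x = (γ/w) (R - x)`: this is the equality at `j = N`.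
Moving mass `t` from `ξ_j` to `ξ_{j+1}` affects only three terms, and since this cannot increase
`T_N`, the derivative at `t = 0` gives, whenever `ξ_j > 0`,
`(1 - p) / (1 + γ ξ_{j+1}) + p / (1 + (γ/w) R_j) ≤ 1 / (1 + γ ξ_j)`, `R_j = B - ∑_{i≤j} ξ_i`.
Applied to the last nonzero coordinate this forces `∑ ξ_i < B`; then it propagates
`ξ_{j+1} < R_j / w` to `ξ_j < R_j / w ≤ R_{j-1} / w`, downwards from the equality at `N`.
-/

open Real

/-- The finite-horizon throughput functional `T_N` (log base 2), evaluated at a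
sequence indexed from 1 (only coordinates `1,…,N` matter). -/
noncomputable def TN (B γ p : ℝ) (w N : ℕ) (ξ : ℕ → ℝ) : ℝ :=
  (∑ k ∈ Finset.Icc 1 w, p ^ 2 * (1 - p) ^ (k - 1) * ((k : ℝ) / 2) *
      Real.logb 2 (1 + γ * B / k))
  + (∑ j ∈ Finset.Icc 1 N, p * (1 - p) ^ (j + w - 1) * (1 / 2) *
      Real.logb 2 (1 + γ * ξ j))
  + (∑ k ∈ Finset.Icc 1 N, p ^ 2 * (1 - p) ^ (k + w - 1) * ((w : ℝ) / 2) *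
      Real.logb 2 (1 + (γ / w) * (B - ∑ j ∈ Finset.Icc 1 k, ξ j)))
  + p * (1 - p) ^ (w + N) * ((w : ℝ) / 2) *
      Real.logb 2 (1 + (γ / w) * (B - ∑ j ∈ Finset.Icc 1 N, ξ j))

/-- The admissible simplex `{ξ : ξ_j ≥ 0, ∑_{j=1}^N ξ_j ≤ B}`, as sequences supported
on coordinates `1,…,N`. -/
def adm (B : ℝ) (N : ℕ) : Set (ℕ → ℝ) :=
  {ξ | (∀ j, 1 ≤ j → j ≤ N → 0 ≤ ξ j) ∧ (∀ j, j = 0 ∨ N < j → ξ j = 0)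
      ∧ ∑ j ∈ Finset.Icc 1 N, ξ j ≤ B}

theorem HasDerivAt.nonpos_of_isMaxOn_Icc {f : ℝ → ℝ} {f' a b : ℝ} (hf : HasDerivAt f f' a)
    (hab : a < b) (hmax : IsMaxOn f (Set.Icc a b) a) : f' ≤ 0 := by
  have hcone : b - a ∈ posTangentConeAt (Set.Icc a b) a :=
    sub_mem_posTangentConeAt_of_segment_subset (segment_eq_Icc hab.le).subset
  have := hmax.localize.hasFDerivWithinAt_nonpos hf.hasFDerivAt.hasFDerivWithinAt hcone
  simp only [ContinuousLinearMap.toSpanSingleton_apply, smul_eq_mul] at this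
  exact nonpos_of_mul_nonpos_right this (sub_pos.2 hab)

theorem log_add_mul_log_lt {u v m : ℝ} (hu : 0 < u) (hv : 0 < v) (huv : u ≠ v) (hm : 0 < m) :
    log u + m * log v < (1 + m) * log ((u + m * v) / (1 + m)) := by
  have h1m : 0 < 1 + m := by linarith
  have key := strictConcaveOn_log_Ioi.2 (Set.mem_Ioi.2 hu) (Set.mem_Ioi.2 hv) huv
    (by positivity : 0 < 1 / (1 + m)) (by positivity : 0 < m / (1 + m)) (by field_simp)
  rw [smul_eq_mul, smul_eq_mul, smul_eq_mul, smul_eq_mul,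
    show 1 / (1 + m) * u + m / (1 + m) * v = (u + m * v) / (1 + m) by ring] at key
  calc log u + m * log v = (1 + m) * (1 / (1 + m) * log u + m / (1 + m) * log v) := by
        field_simp
    _ < (1 + m) * log ((u + m * v) / (1 + m)) := mul_lt_mul_of_pos_left key h1m

noncomputable def logSplit (γ m R y : ℝ) : ℝ := log (1 + γ * y) + m * log (1 + γ / m * (R - y))

theorem logSplit_lt_of_ne {γ m R y : ℝ} (hγ : 0 < γ) (hm : 0 < m) (hy : 0 ≤ y) (hyR : y ≤ R)
    (hne : y ≠ R / (m + 1)) : logSplit γ m R y < logSplit γ m R (R / (m + 1)) := by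
  have hu : 0 < 1 + γ * y := by positivity
  have hRy : 0 ≤ R - y := sub_nonneg.2 hyR
  have hv : 0 < 1 + γ / m * (R - y) := by positivity
  have huv : 1 + γ * y ≠ 1 + γ / m * (R - y) := by
    refine fun h => hne ?_
    field_simp at h ⊢
    nlinarith
  have hopt : 1 + γ / m * (R - R / (m + 1)) = 1 + γ * (R / (m + 1)) := by
    field_simp; ring
  have hmean : (1 + γ * y + m * (1 + γ / m * (R - y))) / (1 + m) = 1 + γ * (R / (m + 1)) := by
    field_simp; ring
  have := log_add_mul_log_lt hu hv huv hm
  rw [hmean] at this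
  unfold logSplit
  rw [hopt]
  linarith

open Finset

theorem sum_Icc_update_last {N : ℕ} (hN : 1 ≤ N) (ξ : ℕ → ℝ) (x : ℝ) :
    ∑ i ∈ Icc 1 N, Function.update ξ N x i = ∑ i ∈ Icc 1 N, ξ i - ξ N + x := by
  have hNmem : N ∈ Icc 1 N := mem_Icc.2 ⟨hN, le_rfl⟩
  rw [sum_update_of_mem hNmem, ← add_sum_erase _ _ hNmem, sdiff_singleton_eq_erase]
  ring

section Perturbation

variable (B γ p : ℝ) (w N : ℕ)

theorem TN_sub_TN (ξ η : ℕ → ℝ) :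
    TN B γ p w N η - TN B γ p w N ξ =
      ∑ j ∈ Icc 1 N, p * (1 - p) ^ (j + w - 1) * (1 / 2) *
          (logb 2 (1 + γ * η j) - logb 2 (1 + γ * ξ j))
      + ∑ k ∈ Icc 1 N, p ^ 2 * (1 - p) ^ (k + w - 1) * ((w : ℝ) / 2) *
          (logb 2 (1 + γ / w * (B - ∑ j ∈ Icc 1 k, η j))
            - logb 2 (1 + γ / w * (B - ∑ j ∈ Icc 1 k, ξ j)))
      + p * (1 - p) ^ (w + N) * ((w : ℝ) / 2) *
          (logb 2 (1 + γ / w * (B - ∑ j ∈ Icc 1 N, η j))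
            - logb 2 (1 + γ / w * (B - ∑ j ∈ Icc 1 N, ξ j))) := by
  simp only [TN, mul_sub, sum_sub_distrib]
  ring

theorem TN_update_last_sub (hN : 1 ≤ N) (ξ : ℕ → ℝ) (x : ℝ) :
    TN B γ p w N (Function.update ξ N x) - TN B γ p w N ξ =
      p * (1 - p) ^ (N + w - 1) / (2 * log 2) *
        (logSplit γ w (B - ∑ i ∈ Icc 1 N, ξ i + ξ N) x
          - logSplit γ w (B - ∑ i ∈ Icc 1 N, ξ i + ξ N) (ξ N)) := by
  have hNmem : N ∈ Icc 1 N := mem_Icc.2 ⟨hN, le_rfl⟩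
  have hpartial : ∀ k ∈ Icc 1 N, k ≠ N →
      ∑ i ∈ Icc 1 k, Function.update ξ N x i = ∑ i ∈ Icc 1 k, ξ i := fun k hk hkN =>
    sum_congr rfl fun i hi => Function.update_of_ne (by grind) _ _
  have hlast := sum_Icc_update_last hN ξ x
  rw [TN_sub_TN, hlast,
    sum_eq_single_of_mem N hNmem fun j _ hj => by rw [Function.update_of_ne hj, sub_self, mul_zero],
    sum_eq_single_of_mem N hNmem fun k hk hkN => by rw [hpartial k hk hkN, sub_self, mul_zero],
    hlast, Function.update_self]
  have hpow : (1 - p) ^ (w + N) = (1 - p) ^ (N + w - 1) * (1 - p) := by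
    rw [← pow_succ]; congr 1; omega
  have hres : B - (∑ i ∈ Icc 1 N, ξ i - ξ N + x) = B - ∑ i ∈ Icc 1 N, ξ i + ξ N - x := by ring
  simp only [logSplit, add_sub_cancel_right, hres, logb, hpow]
  field_simp
  ring

def moveMass (ξ : ℕ → ℝ) (j : ℕ) (t : ℝ) : ℕ → ℝ := ξ + Pi.single (j + 1) t - Pi.single j t

noncomputable def moveValue (ξ : ℕ → ℝ) (j : ℕ) (t : ℝ) : ℝ :=
  log (1 + γ * (ξ j - t)) + (1 - p) * log (1 + γ * (ξ (j + 1) + t))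
    + p * w * log (1 + γ / w * (B - ∑ i ∈ Icc 1 j, ξ i + t))

theorem sum_Icc_moveMass {j : ℕ} (hj : 1 ≤ j) (ξ : ℕ → ℝ) (t : ℝ) (k : ℕ) :
    ∑ i ∈ Icc 1 k, moveMass ξ j t i = ∑ i ∈ Icc 1 k, ξ i - if k = j then t else 0 := by
  simp only [moveMass, Pi.add_apply, Pi.sub_apply, sum_add_distrib, sum_sub_distrib,
    sum_pi_single', mem_Icc]
  split_ifs <;> first | ring1 | (exfalso; omega)

theorem TN_moveMass_sub {j : ℕ} (hj : 1 ≤ j) (hjN : j < N) (ξ : ℕ → ℝ) (t : ℝ) :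
    TN B γ p w N (moveMass ξ j t) - TN B γ p w N ξ =
      p * (1 - p) ^ (j + w - 1) / (2 * log 2) *
        (moveValue B γ p w ξ j t - moveValue B γ p w ξ j 0) := by
  have hjmem : j ∈ Icc 1 N := mem_Icc.2 ⟨hj, hjN.le⟩
  have hpair : {j, j + 1} ⊆ Icc 1 N := by
    intro i hi; simp only [mem_insert, mem_singleton] at hi; grind
  have hmove : ∀ i, i ≠ j → i ≠ j + 1 → moveMass ξ j t i = ξ i := by
    intro i h1 h2; simp [moveMass, h1, h2]
  rw [TN_sub_TN, ← sum_subset hpair fun i _ hi => by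
      simp only [mem_insert, mem_singleton, not_or] at hi
      rw [hmove i hi.1 hi.2, sub_self, mul_zero],
    sum_pair (by omega),
    sum_eq_single_of_mem j hjmem fun k _ hkj => by
      rw [sum_Icc_moveMass hj, if_neg hkj, sub_zero, sub_self, mul_zero],
    sum_Icc_moveMass hj, sum_Icc_moveMass hj, if_pos rfl, if_neg hjN.ne', sub_zero, sub_self,
    mul_zero, add_zero]
  have hpow : (1 - p) ^ (j + 1 + w - 1) = (1 - p) ^ (j + w - 1) * (1 - p) := by
    rw [← pow_succ]; congr 1; omega
  have hmove_j : moveMass ξ j t j = ξ j - t := by simp [moveMass]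
  have hmove_succ : moveMass ξ j t (j + 1) = ξ (j + 1) + t := by simp [moveMass]
  have hres : B - (∑ i ∈ Icc 1 j, ξ i - t) = B - ∑ i ∈ Icc 1 j, ξ i + t := by ring
  rw [hmove_j, hmove_succ, hpow, hres]
  simp only [moveValue, logb, sub_zero, add_zero]
  field_simp
  ring

end Perturbation

theorem hasDerivAt_moveValue {B γ p : ℝ} {w : ℕ} (hw : 0 < w) {ξ : ℕ → ℝ} {j : ℕ}
    (hj : 0 < 1 + γ * ξ j) (hsucc : 0 < 1 + γ * ξ (j + 1))
    (hres : 0 < 1 + γ / w * (B - ∑ i ∈ Icc 1 j, ξ i)) :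
    HasDerivAt (moveValue B γ p w ξ j)
      (γ * ((1 - p) / (1 + γ * ξ (j + 1)) + p / (1 + γ / w * (B - ∑ i ∈ Icc 1 j, ξ i))
        - 1 / (1 + γ * ξ j))) 0 := by
  have hw' : (w : ℝ) ≠ 0 := by positivity
  have h1 := ((((hasDerivAt_id (0 : ℝ)).const_sub (ξ j)).const_mul γ).const_add 1).log
    (by simpa using hj.ne')
  have h2 := ((((hasDerivAt_id (0 : ℝ)).const_add (ξ (j + 1))).const_mul γ).const_add 1).log
    (by simpa using hsucc.ne')
  have h3 := ((((hasDerivAt_id (0 : ℝ)).const_add (B - ∑ i ∈ Icc 1 j, ξ i)).const_mul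
    (γ / w)).const_add 1).log (by simpa using hres.ne')
  refine ((h1.add (h2.const_mul (1 - p))).add (h3.const_mul (p * w))).congr_deriv ?_
  simp only [id, sub_zero, add_zero]
  field_simp
  ring

section Admissible

variable {B : ℝ} {N : ℕ} {ξ : ℕ → ℝ}

theorem sum_Icc_le_sum_Icc_of_mem_adm (hξ : ξ ∈ adm B N) {k m : ℕ} (hkm : k ≤ m) (hm : m ≤ N) :
    ∑ i ∈ Icc 1 k, ξ i ≤ ∑ i ∈ Icc 1 m, ξ i :=
  sum_le_sum_of_subset_of_nonneg (Icc_subset_Icc le_rfl hkm) fun i hi _ =>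
    hξ.1 i (mem_Icc.1 hi).1 ((mem_Icc.1 hi).2.trans hm)

theorem update_last_mem_adm (hN : 1 ≤ N) (hξ : ξ ∈ adm B N) {x : ℝ} (hx : 0 ≤ x)
    (hxB : x ≤ B - ∑ i ∈ Icc 1 N, ξ i + ξ N) : Function.update ξ N x ∈ adm B N := by
  refine ⟨fun i hi hiN => ?_, fun i hi => ?_, ?_⟩
  · rcases eq_or_ne i N with rfl | hne
    · simpa using hx
    · simpa [hne] using hξ.1 i hi hiN
  · have hne : i ≠ N := by omega
    simpa [hne] using hξ.2.1 i hi
  · rw [sum_Icc_update_last hN]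
    linarith

theorem moveMass_mem_adm {j : ℕ} (hj : 1 ≤ j) (hjN : j < N) (hξ : ξ ∈ adm B N) {t : ℝ}
    (ht : 0 ≤ t) (htj : t ≤ ξ j) : moveMass ξ j t ∈ adm B N := by
  refine ⟨fun i hi hiN => ?_, fun i hi => ?_, ?_⟩
  · have := hξ.1 i hi hiN
    have := hξ.1 (j + 1) (by omega) hjN
    simp only [moveMass, Pi.add_apply, Pi.sub_apply, Pi.single_apply]
    split_ifs <;> subst_vars <;> linarith
  · simp only [moveMass, Pi.add_apply, Pi.sub_apply, Pi.single_apply,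
      if_neg (show i ≠ j + 1 by omega), if_neg (show i ≠ j by omega), hξ.2.1 i hi]
    ring
  · rw [sum_Icc_moveMass hj, if_neg hjN.ne', sub_zero]
    exact hξ.2.2

end Admissible

section Maximizer

variable {B γ p : ℝ} {w N : ℕ} {ξ : ℕ → ℝ}

theorem TN_maximizer_last_eq (hγ : 0 < γ) (hw : 0 < w) (hp : 0 < p) (hp1 : p < 1)
    (hN : 1 ≤ N) (hξ : ξ ∈ adm B N) (hmax : IsMaxOn (TN B γ p w N) (adm B N) ξ) :
    ξ N = (B - ∑ i ∈ Icc 1 N, ξ i) / w := by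
  set R := B - ∑ i ∈ Icc 1 N, ξ i + ξ N
  have hw' : (0 : ℝ) < w := by exact_mod_cast hw
  have hξN : 0 ≤ ξ N := hξ.1 N hN le_rfl
  have hξNR : ξ N ≤ R := by linarith [hξ.2.2]
  suffices h : ξ N = R / (w + 1) by
    rw [eq_div_iff hw'.ne']
    field_simp at h
    linarith
  by_contra hne
  have hopt_nonneg : 0 ≤ R / (w + 1) := div_nonneg (by linarith) (by linarith)
  have hopt_le : R / (w + 1) ≤ R := div_le_self (by linarith) (by linarith)
  have hgain := logSplit_lt_of_ne hγ hw' hξN hξNR hne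
  have hle := isMaxOn_iff.1 hmax _ (update_last_mem_adm hN hξ hopt_nonneg hopt_le)
  have hdiff := TN_update_last_sub B γ p w N hN ξ (R / (w + 1))
  have hcoef : 0 < p * (1 - p) ^ (N + w - 1) / (2 * log 2) := by
    have := pow_pos (sub_pos.2 hp1) (N + w - 1)
    have := log_pos one_lt_two
    positivity
  nlinarith [mul_pos hcoef (sub_pos.2 hgain)]

theorem TN_maximizer_moveMass_le (hγ : 0 < γ) (hw : 0 < w) (hp : 0 < p) (hp1 : p < 1)
    {j : ℕ} (hj : 1 ≤ j) (hjN : j < N) (hξ : ξ ∈ adm B N)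
    (hmax : IsMaxOn (TN B γ p w N) (adm B N) ξ) (hpos : 0 < ξ j) :
    (1 - p) / (1 + γ * ξ (j + 1)) + p / (1 + γ / w * (B - ∑ i ∈ Icc 1 j, ξ i))
      ≤ 1 / (1 + γ * ξ j) := by
  have hres : 0 ≤ B - ∑ i ∈ Icc 1 j, ξ i := by
    linarith [sum_Icc_le_sum_Icc_of_mem_adm hξ hjN.le le_rfl, hξ.2.2]
  have hsucc : 0 ≤ ξ (j + 1) := hξ.1 (j + 1) (by omega) hjN
  have hderiv := hasDerivAt_moveValue (p := p) hw (by positivity : 0 < 1 + γ * ξ j)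
    (by positivity : 0 < 1 + γ * ξ (j + 1))
    (by positivity : 0 < 1 + γ / w * (B - ∑ i ∈ Icc 1 j, ξ i))
  have hcoef : 0 < p * (1 - p) ^ (j + w - 1) / (2 * log 2) := by
    have := pow_pos (sub_pos.2 hp1) (j + w - 1)
    have := log_pos one_lt_two
    positivity
  have hmaxOn : IsMaxOn (moveValue B γ p w ξ j) (Set.Icc 0 (ξ j)) 0 := fun t ht => by
    have hle := isMaxOn_iff.1 hmax _ (moveMass_mem_adm hj hjN hξ ht.1 ht.2)
    have hdiff := TN_moveMass_sub B γ p w N hj hjN ξ t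
    show moveValue B γ p w ξ j t ≤ moveValue B γ p w ξ j 0
    nlinarith
  have := hderiv.nonpos_of_isMaxOn_Icc hpos hmaxOn
  by_contra hlt
  nlinarith

theorem TN_maximizer_sum_lt (hB : 0 < B) (hγ : 0 < γ) (hw : 0 < w) (hp : 0 < p) (hp1 : p < 1)
    (hN : 1 ≤ N) (hξ : ξ ∈ adm B N) (hmax : IsMaxOn (TN B γ p w N) (adm B N) ξ) :
    ∑ i ∈ Icc 1 N, ξ i < B := by
  by_contra hge
  have hsum : ∑ i ∈ Icc 1 N, ξ i = B := le_antisymm hξ.2.2 (not_lt.1 hge)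
  have hξN : ξ N = 0 := by
    rw [TN_maximizer_last_eq hγ hw hp hp1 hN hξ hmax, hsum, sub_self, zero_div]
  obtain ⟨i, hiN, hi⟩ : ∃ i ≤ N, 0 < ξ i := by
    by_contra! h
    have : ∑ i ∈ Icc 1 N, ξ i ≤ 0 := sum_nonpos fun i hi => h i (mem_Icc.1 hi).2
    linarith
  obtain ⟨j, hjN, hj, hafter⟩ : ∃ j ≤ N, 0 < ξ j ∧ ∀ i, j < i → i ≤ N → ¬0 < ξ i :=
    ⟨_, Nat.findGreatest_le N, Nat.findGreatest_spec (P := fun i => 0 < ξ i) hiN hi,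
      fun _ => Nat.findGreatest_is_greatest⟩
  replace hjN : j < N := hjN.lt_of_ne fun h => by simp [h, hξN] at hj
  have hj1 : 1 ≤ j := Nat.one_le_iff_ne_zero.2 fun h => by simp [h, hξ.2.1 0 (Or.inl rfl)] at hj
  have hzero : ∀ i, j < i → i ≤ N → ξ i = 0 := fun i hji hiN =>
    le_antisymm (not_lt.1 (hafter i hji hiN)) (hξ.1 i (by omega) hiN)
  have hSj : ∑ i ∈ Icc 1 j, ξ i = B := by
    rw [← hsum]
    refine sum_subset (Icc_subset_Icc le_rfl hjN.le) fun i hi hij => hzero i ?_ (mem_Icc.1 hi).2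
    simp only [mem_Icc, not_and, not_le] at hi hij
    omega
  have hcond := TN_maximizer_moveMass_le hγ hw hp hp1 hj1 hjN hξ hmax hj
  rw [hzero (j + 1) (by omega) hjN, hSj] at hcond
  have : 1 / (1 + γ * ξ j) < 1 := by
    rw [div_lt_one (by positivity)]
    linarith [mul_pos hγ hj]
  simp only [mul_zero, add_zero, sub_self, div_one, sub_add_cancel] at hcond
  linarith

theorem TN_maximizer_lt_residual_of_succ_lt (hγ : 0 < γ) (hw : 0 < w) (hp : 0 < p)
    (hp1 : p < 1) (hξ : ξ ∈ adm B N) (hmax : IsMaxOn (TN B γ p w N) (adm B N) ξ)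
    (hbudget : ∑ i ∈ Icc 1 N, ξ i < B) {j : ℕ} (hj : 1 ≤ j) (hjN : j < N)
    (hsucc : ξ (j + 1) < (B - ∑ i ∈ Icc 1 j, ξ i) / w) :
    ξ j < (B - ∑ i ∈ Icc 1 j, ξ i) / w := by
  have hw' : (0 : ℝ) < w := by exact_mod_cast hw
  have hres : 0 < (B - ∑ i ∈ Icc 1 j, ξ i) / w :=
    div_pos (by linarith [sum_Icc_le_sum_Icc_of_mem_adm hξ hjN.le le_rfl]) hw'
  by_contra! hge
  have hcond := TN_maximizer_moveMass_le hγ hw hp hp1 hj hjN hξ hmax (hres.trans_le hge)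
  set C := 1 + γ / w * (B - ∑ i ∈ Icc 1 j, ξ i)
  have hC : C = 1 + γ * ((B - ∑ i ∈ Icc 1 j, ξ i) / w) := by rw [mul_div_assoc']; ring
  have hsucc_pos : 0 < 1 + γ * ξ (j + 1) := by
    have := hξ.1 (j + 1) (by omega) hjN
    positivity
  have hsucc_lt : 1 + γ * ξ (j + 1) < C := by rw [hC]; gcongr
  have hC_le : C ≤ 1 + γ * ξ j := by rw [hC]; gcongr
  have h1 : (1 - p) / C < (1 - p) / (1 + γ * ξ (j + 1)) :=
    div_lt_div_of_pos_left (sub_pos.2 hp1) hsucc_pos hsucc_lt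
  have h2 : 1 / (1 + γ * ξ j) ≤ 1 / C := one_div_le_one_div_of_le (hsucc_pos.trans hsucc_lt) hC_le
  have h3 : (1 - p) / C + p / C = 1 / C := by rw [← add_div, sub_add_cancel]
  linarith

theorem TN_maximizer_succ_lt_residual (hB : 0 < B) (hγ : 0 < γ) (hw : 0 < w) (hp : 0 < p)
    (hp1 : p < 1) (hN : 1 ≤ N) (hξ : ξ ∈ adm B N) (hmax : IsMaxOn (TN B γ p w N) (adm B N) ξ)
    {k : ℕ} (hk : k < N) : ξ (k + 1) < (B - ∑ i ∈ Icc 1 k, ξ i) / w := by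
  have hbudget := TN_maximizer_sum_lt hB hγ hw hp hp1 hN hξ hmax
  have hlast := TN_maximizer_last_eq hγ hw hp hp1 hN hξ hmax
  have hw' : (0 : ℝ) < w := by exact_mod_cast hw
  obtain ⟨M, rfl⟩ : ∃ M, N = M + 1 := ⟨N - 1, by omega⟩
  refine Nat.decreasingInduction (motive := fun k _ => ξ (k + 1) < (B - ∑ i ∈ Icc 1 k, ξ i) / w)
    (fun k hk ih => ?_) ?_ (Nat.le_of_lt_succ hk)
  · have hmono : ∑ i ∈ Icc 1 k, ξ i ≤ ∑ i ∈ Icc 1 (k + 1), ξ i :=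
      sum_Icc_le_sum_Icc_of_mem_adm hξ k.le_succ (by omega)
    calc ξ (k + 1) < (B - ∑ i ∈ Icc 1 (k + 1), ξ i) / w :=
          TN_maximizer_lt_residual_of_succ_lt hγ hw hp hp1 hξ hmax hbudget (by omega) (by omega) ih
      _ ≤ (B - ∑ i ∈ Icc 1 k, ξ i) / w := by gcongr
  · rw [sum_Icc_succ_top (by omega)] at hbudget hlast
    have hpos : 0 < ξ (M + 1) := by rw [hlast]; exact div_pos (by linarith) hw'
    rw [lt_div_iff₀ hw']
    rw [eq_div_iff hw'.ne'] at hlast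
    nlinarith

end Maximizer

/-- For the maximizer of `T_N`: strict inequality `ξ_j < (B - ∑_{i=1}^j ξ_i)/w`
for all `j < N`, and equality `ξ_N = (B - ∑_{i=1}^N ξ_i)/w` at `j = N`. -/
theorem TN_maximizer_residual (B γ p : ℝ) (w N : ℕ) (hB : 0 < B) (hγ : 0 < γ)
    (hw : 1 ≤ w) (hp : 0 < p) (hp1 : p < 1) (hN : 1 ≤ N) (ξ : ℕ → ℝ)
    (hξ : ξ ∈ adm B N) (hmax : ∀ η ∈ adm B N, TN B γ p w N η ≤ TN B γ p w N ξ) :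
    (∀ j, 1 ≤ j → j < N → ξ j < (B - ∑ i ∈ Finset.Icc 1 j, ξ i) / w)
    ∧ ξ N = (B - ∑ i ∈ Finset.Icc 1 N, ξ i) / w := by
  have hmax' : IsMaxOn (TN B γ p w N) (adm B N) ξ := isMaxOn_iff.2 hmax
  refine ⟨fun j hj hjN => ?_, TN_maximizer_last_eq hγ hw hp hp1 hN hξ hmax'⟩
  exact TN_maximizer_lt_residual_of_succ_lt hγ hw hp hp1 hξ hmax'
    (TN_maximizer_sum_lt hB hγ hw hp hp1 hN hξ hmax') hj hjN
    (TN_maximizer_succ_lt_residual hB hγ hw hp hp1 hN hξ hmax' hjN)
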